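/- Let G = F_p^m (elementary abelian p-group), p an odd prime, 1 ≤ k ≤ p^m. The incidence structure (G, B_k^x) is a 1-design if and only if either (p | k, k ≠ p^m, and x arbitrary) or (k = p^m and x = 0). -/

import Mathlib

open Finset

/-- The family of `k`-element subsets of `G` whose elements sum to `x`. -/
def sumBlocks (G : Type) [AddCommGroup G] [Fintype G] [DecidableEq G]
    (k : ℕ) (x : G) : Finset (Finset G) :=
  Finset.univ.filter (fun T => T.card = k ∧ T.sum id = x)

/-- The family of `k`-element subsets of `G \ {0}` whose elements sum to `x`. -/
def sumBlocksStar (G : Type) [AddCommGroup G] [Fintype G] [DecidableEq G]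
    (k : ℕ) (x : G) : Finset (Finset G) :=
  Finset.univ.filter (fun T => T.card = k ∧ T.sum id = x ∧ (0 : G) ∉ T)

/-- `(G, B_k^x)` is a 1-design: the block family is nonempty and every
point of `G` lies in the same number of blocks. -/
def isOneDesign (G : Type) [AddCommGroup G] [Fintype G] [DecidableEq G]
    (k : ℕ) (x : G) : Prop :=
  sumBlocks G k x ≠ ∅ ∧ ∃ r : ℕ, ∀ y : G,
    ((sumBlocks G k x).filter (fun B => y ∈ B)).card = r

/-- `e(x) = max {d : d ∣ exp(G), x ∈ dG}`. -/
noncomputable def eMax (G : Type) [AddCommGroup G] [Fintype G] [DecidableEq G] (x : G) : ℕ :=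
  Nat.findGreatest (fun d => d ∣ AddMonoid.exponent G ∧ ∃ y : G, d • y = x)
    (AddMonoid.exponent G)

/-!
Translation by `g` maps `B_k^x` onto `B_k^(x + k • g)` and moves the points by `g`.
If `p ∣ k`, translations therefore preserve `B_k^x` and act transitively on the points, so
`B_k^x` is a 1-design as soon as it is nonempty. A block of sum `0` is a union of `k / p` cosets
of a line; exchanging one of its points for an outside point gives a block of nonzero sum, and a
linear automorphism carries it to any prescribed nonzero sum.
If `p ∤ k`, then `k • ·` is bijective, so every `B_k^x'` has as many blocks through `0` as
`B_k^x` has through a suitable point; summing over `x'` a 1-design would give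
`p ^ m * r = (p ^ m - 1).choose (k - 1)`, which is prime to `p`.
For `k = p ^ m` the only candidate block is the whole group, whose sum is `0` since `p` is odd.
-/

section Blocks

variable {G : Type} [AddCommGroup G] [Fintype G] [DecidableEq G]

lemma mem_sumBlocks {k : ℕ} {x : G} {T : Finset G} :
    T ∈ sumBlocks G k x ↔ #T = k ∧ ∑ t ∈ T, t = x := by
  simp [sumBlocks]

lemma map_addRight_mem_sumBlocks {k : ℕ} {x : G} {T : Finset G} (g : G)
    (hT : T ∈ sumBlocks G k x) :
    T.map (Equiv.addRight g).toEmbedding ∈ sumBlocks G k (x + k • g) := by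
  obtain ⟨hcard, hsum⟩ := mem_sumBlocks.1 hT
  simp [mem_sumBlocks, sum_add_distrib, hcard, hsum]

lemma card_filter_mem_sumBlocks_le (k : ℕ) (x y g : G) :
    #{B ∈ sumBlocks G k x | y ∈ B} ≤ #{B ∈ sumBlocks G k (x + k • g) | y + g ∈ B} := by
  refine card_le_card_of_injOn (·.map (Equiv.addRight g).toEmbedding) ?_ (map_injective _).injOn
  intro B hB
  simp only [mem_coe, mem_filter] at hB ⊢
  exact ⟨map_addRight_mem_sumBlocks g hB.1, by simpa using hB.2⟩

lemma card_filter_mem_sumBlocks_add (k : ℕ) (x y g : G) :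
    #{B ∈ sumBlocks G k x | y ∈ B} = #{B ∈ sumBlocks G k (x + k • g) | y + g ∈ B} := by
  refine (card_filter_mem_sumBlocks_le k x y g).antisymm ?_
  simpa using card_filter_mem_sumBlocks_le k (x + k • g) (y + g) (-g)

lemma sum_card_filter_mem_sumBlocks {k : ℕ} (hk : 0 < k) (y : G) :
    ∑ x : G, #{B ∈ sumBlocks G k x | y ∈ B} = (Fintype.card G - 1).choose (k - 1) := by
  have hfiber : ∀ x : G, {B ∈ sumBlocks G k x | y ∈ B} =
      {T ∈ {T ∈ powersetCard k (univ : Finset G) | {y} ⊆ T} | ∑ t ∈ T, t = x} := by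
    intro x
    ext T
    simp only [sumBlocks, id_eq, mem_filter, mem_univ, true_and, and_assoc, singleton_subset_iff,
      mem_powersetCard, subset_univ]
    tauto
  simp_rw [hfiber, ← card_eq_sum_card_fiberwise (fun _ _ => mem_univ _)]
  simpa using card_filter_powersetCard_subset {y} univ k (subset_univ _) (by rw [card_singleton]; exact hk)

lemma isOneDesign_of_forall_nsmul_eq_zero {k : ℕ} {x : G} (hk : ∀ g : G, k • g = 0)
    (hne : (sumBlocks G k x).Nonempty) : isOneDesign G k x :=
  ⟨hne.ne_empty, _, fun y => by simpa [hk] using (card_filter_mem_sumBlocks_add k x 0 y).symm⟩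

lemma card_dvd_choose_of_isOneDesign {k : ℕ} {x : G} (hk : 0 < k)
    (hsurj : Function.Surjective fun g : G => k • g) (h : isOneDesign G k x) :
    Fintype.card G ∣ (Fintype.card G - 1).choose (k - 1) := by
  obtain ⟨-, r, hr⟩ := h
  have hconst : ∀ x' : G, #{B ∈ sumBlocks G k x' | 0 ∈ B} = r := by
    intro x'
    obtain ⟨g, hg⟩ := hsurj (x' - x)
    simpa [hg] using (card_filter_mem_sumBlocks_add k x (-g) g).symm.trans (hr (-g))
  refine ⟨r, ?_⟩
  simp [← sum_card_filter_mem_sumBlocks hk (0 : G), hconst]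

lemma mem_sumBlocks_card {x : G} {T : Finset G} :
    T ∈ sumBlocks G (Fintype.card G) x ↔ T = univ ∧ ∑ g, g = x := by
  rw [mem_sumBlocks, card_eq_iff_eq_univ]
  constructor <;> rintro ⟨rfl, h⟩ <;> exact ⟨rfl, h⟩

lemma isOneDesign_card_iff {x : G} : isOneDesign G (Fintype.card G) x ↔ ∑ g, g = x := by
  constructor
  · rintro ⟨hne, -⟩
    obtain ⟨T, hT⟩ := nonempty_iff_ne_empty.2 hne
    exact (mem_sumBlocks_card.1 hT).2
  · intro h
    have hblocks : sumBlocks G (Fintype.card G) x = {univ} := by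
      ext T
      simp [mem_sumBlocks_card, h]
    exact ⟨by simp [hblocks], 1, fun y => by simp [hblocks, filter_singleton]⟩

lemma map_mem_sumBlocks {H : Type} [AddCommGroup H] [Fintype H] [DecidableEq H] (e : G ≃+ H)
    {k : ℕ} {x : G} {T : Finset G} (hT : T ∈ sumBlocks G k x) :
    T.map e.toEquiv.toEmbedding ∈ sumBlocks H k (e x) := by
  obtain ⟨hcard, hsum⟩ := mem_sumBlocks.1 hT
  simp [mem_sumBlocks, hcard, ← hsum, map_sum]

lemma insert_erase_mem_sumBlocks {k : ℕ} {x s a : G} {T : Finset G}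
    (hT : T ∈ sumBlocks G k x) (hs : s ∈ T) (ha : a ∉ T) :
    insert a (T.erase s) ∈ sumBlocks G k (a + (x - s)) := by
  obtain ⟨hcard, hsum⟩ := mem_sumBlocks.1 hT
  have ha' : a ∉ T.erase s := fun h => ha (mem_of_mem_erase h)
  refine mem_sumBlocks.2 ⟨?_, ?_⟩
  · rw [card_insert_of_notMem ha', card_erase_add_one hs, hcard]
  · rw [sum_insert ha', sum_erase_eq_sub hs, hsum]

end Blocks

lemma Nat.Prime.not_dvd_choose_pow_sub_one {p : ℕ} (hp : p.Prime) {m j : ℕ} (hj : j < p ^ m) :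
    ¬ p ∣ (p ^ m - 1).choose j := by
  induction j with
  | zero => simpa using hp.not_dvd_one
  | succ j ih =>
    intro hdvd
    have hpascal := Nat.choose_succ_succ' (p ^ m - 1) j
    rw [Nat.sub_add_cancel (Nat.one_le_pow _ _ hp.pos)] at hpascal
    have hpow : p ∣ (p ^ m).choose (j + 1) := hp.dvd_choose_pow j.succ_ne_zero hj.ne
    rw [hpascal] at hpow
    exact ih (by omega) ((Nat.dvd_add_left hdvd).1 hpow)

lemma sum_univ_eq_zero_of_two_nsmul {A : Type} [AddCommGroup A] [Fintype A]
    (h2 : ∀ a : A, 2 • a = 0 → a = 0) : ∑ a : A, a = 0 := by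
  apply h2
  have hneg : ∑ a : A, -a = ∑ a : A, a := Equiv.sum_comp (Equiv.neg A) id
  rw [two_nsmul]
  nth_rewrite 1 [← hneg]
  rw [sum_neg_distrib, neg_add_cancel]

lemma exists_linearEquiv_apply_eq {K V : Type*} [Field K] [AddCommGroup V] [Module K V]
    {a x : V} (ha : a ≠ 0) (hx : x ≠ 0) : ∃ e : V ≃ₗ[K] V, e a = x := by
  obtain ⟨e, he⟩ := Submodule.exists_linearEquiv_restrict_eq
    ((LinearEquiv.coord K V a ha).trans
      (LinearEquiv.toSpanNonzeroSingleton K V x hx))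
  refine ⟨e, ?_⟩
  simpa [LinearEquiv.coord_self] using (he ⟨a, Submodule.mem_span_singleton_self a⟩).symm

lemma product_mem_sumBlocks {A B : Type} [AddCommGroup A] [Fintype A] [DecidableEq A]
    [AddCommGroup B] [Fintype B] [DecidableEq B]
    (hA : ∑ a : A, a = 0) (hB : ∀ b : B, Fintype.card A • b = 0) (W : Finset B) :
    univ ×ˢ W ∈ sumBlocks (A × B) (Fintype.card A * #W) 0 := by
  refine mem_sumBlocks.2 ⟨by simp, Prod.ext ?_ ?_⟩
  · simp [Prod.fst_sum, sum_product_right, hA]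
  · simp [Prod.snd_sum, sum_product, hB]

section ZModModule

variable {p : ℕ} {V : Type} [AddCommGroup V] [Module (ZMod p) V]

lemma nsmul_eq_zero_of_dvd {k : ℕ} (hk : p ∣ k) (v : V) : k • v = 0 := by
  rw [← Nat.cast_smul_eq_nsmul (ZMod p), (ZMod.natCast_eq_zero_iff k p).2 hk, zero_smul]

variable [Fact p.Prime]

lemma bijective_nsmul_of_not_dvd {k : ℕ} (hk : ¬ p ∣ k) :
    Function.Bijective fun v : V => k • v := by
  have hk' : (k : ZMod p) ≠ 0 := by rwa [Ne, ZMod.natCast_eq_zero_iff]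
  convert (LinearEquiv.smulOfNeZero (ZMod p) V _ hk').bijective using 1
  exact funext fun v => (Nat.cast_smul_eq_nsmul (ZMod p) k v).symm

lemma sum_univ_eq_zero_of_odd [Fintype V] (hodd : Odd p) : ∑ v : V, v = 0 := by
  have h2 : ¬ p ∣ 2 := fun h => by
    rw [Nat.prime_dvd_prime_iff_eq Fact.out Nat.prime_two] at h
    exact Nat.not_even_iff_odd.2 hodd (h ▸ even_two)
  exact sum_univ_eq_zero_of_two_nsmul fun v hv =>
    (bijective_nsmul_of_not_dvd h2).injective (hv.trans (nsmul_zero 2).symm)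

end ZModModule

lemma sumBlocks_nonempty_of_zero (K : Type*) {V : Type} [Field K] [AddCommGroup V] [Module K V]
    [Fintype V] [DecidableEq V] {k : ℕ} (hk : 0 < k) (hkV : k < Fintype.card V)
    (h0 : (sumBlocks V k 0).Nonempty) (x : V) : (sumBlocks V k x).Nonempty := by
  rcases eq_or_ne x 0 with rfl | hx
  · exact h0
  obtain ⟨S, hS⟩ := h0
  obtain ⟨hcard, -⟩ := mem_sumBlocks.1 hS
  obtain ⟨s, hs⟩ : S.Nonempty := card_pos.1 (hcard ▸ hk)
  obtain ⟨a, -, ha⟩ : ∃ a ∈ univ, a ∉ S :=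
    exists_mem_notMem_of_card_lt_card (by simpa [hcard] using hkV)
  have has : a + (0 - s) ≠ 0 := by
    rw [zero_sub, ← sub_eq_add_neg, sub_ne_zero]
    rintro rfl
    exact ha hs
  obtain ⟨e, he⟩ := exists_linearEquiv_apply_eq (K := K) has hx
  exact ⟨_, he ▸ map_mem_sumBlocks e.toAddEquiv (insert_erase_mem_sumBlocks hS hs ha)⟩

lemma sumBlocks_zero_nonempty {p n k : ℕ} [Fact p.Prime] (hodd : Odd p) (hpk : p ∣ k)
    (hk : k ≤ p ^ (n + 1)) : (sumBlocks (Fin (n + 1) → ZMod p) k 0).Nonempty := by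
  obtain ⟨q, rfl⟩ := hpk
  obtain ⟨W, -, hW⟩ := exists_subset_card_eq (s := (univ : Finset (Fin n → ZMod p))) (n := q)
    (by simpa [pow_succ', (Fact.out : p.Prime).pos] using hk)
  have hblock := product_mem_sumBlocks (A := ZMod p) (sum_univ_eq_zero_of_odd hodd)
    (fun b => by rw [ZMod.card]; exact nsmul_eq_zero_of_dvd (p := p) dvd_rfl b) W
  rw [ZMod.card, hW] at hblock
  exact ⟨_, by
    simpa using map_mem_sumBlocks (Fin.consLinearEquiv (ZMod p) fun _ => ZMod p).toAddEquiv hblock⟩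

lemma sumBlocks_nonempty_of_dvd {p m k : ℕ} [Fact p.Prime] (hodd : Odd p) (hpk : p ∣ k)
    (hk : 0 < k) (hkm : k < p ^ m) (x : Fin m → ZMod p) :
    (sumBlocks (Fin m → ZMod p) k x).Nonempty := by
  obtain ⟨n, rfl⟩ : ∃ n, m = n + 1 :=
    Nat.exists_eq_succ_of_ne_zero (by rintro rfl; rw [pow_zero] at hkm; omega)
  exact sumBlocks_nonempty_of_zero (ZMod p) hk (by simpa using hkm)
    (sumBlocks_zero_nonempty hodd hpk hkm.le) x

theorem stmt6 (p m : ℕ) (hp : p.Prime) (hodd : Odd p) [NeZero p]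
    (k : ℕ) (hk1 : 1 ≤ k) (hkn : k ≤ p ^ m)
    (x : Fin m → ZMod p) :
    isOneDesign (Fin m → ZMod p) k x ↔
      ((p ∣ k ∧ k ≠ p ^ m) ∨ (k = p ^ m ∧ x = 0)) := by
  have := Fact.mk hp
  have hcard : Fintype.card (Fin m → ZMod p) = p ^ m := by simp
  rcases hkn.eq_or_lt with rfl | hlt
  · rw [← hcard, isOneDesign_card_iff, sum_univ_eq_zero_of_odd hodd]
    simp [eq_comm]
  have hm : m ≠ 0 := by rintro rfl; rw [pow_zero] at hlt; omega
  by_cases hpk : p ∣ k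
  · simpa [hpk, hlt.ne] using isOneDesign_of_forall_nsmul_eq_zero (nsmul_eq_zero_of_dvd hpk)
      (sumBlocks_nonempty_of_dvd hodd hpk hk1 hlt x)
  · simp only [hpk, false_and, hlt.ne, false_or, iff_false]
    intro h
    have hdvd := card_dvd_choose_of_isOneDesign hk1 (bijective_nsmul_of_not_dvd hpk).surjective h
    rw [hcard] at hdvd
    exact hp.not_dvd_choose_pow_sub_one (by omega) ((dvd_pow_self p hm).trans hdvd)
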